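/- In the D_n^{(1)} perfect crystal B of level l with j even (\bar{b}_j = (l,0,...,0)), with indices i_1 = i_{2n-2} = 1, i_a = i_{2n-a-1} = a for 2 ≤ a ≤ n-2, and (i_{n-1}, i_n) = (n-1, n), the recursively defined sets B_0 = {(l,0,...,0)}, B_a = ⋃_{m≥0} f_{i_a}^m B_{a-1} \ {0} satisfy: B_a = {(x_1,...,x_{a+1},0,...,0)} for 1 ≤ a ≤ n-2, B_{n-1} = {(x_1,...,x_n,0,...,0)}, B_{n+a-1} = {(x_1,...,x_n,\bar{x}_n,...,\bar{x}_{n-a},0,...,0)} for 1 ≤ a ≤ n-2, and B_{2n-2} = B. -/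
import Mathlib


/- The perfect crystal B of level l for D_n^{(1)}:
   elements (x_1,…,x_n,x̄_n,…,x̄_1) with x_i, x̄_i ≥ 0, x_n = 0 or x̄_n = 0,
   and Σ(x_i + x̄_i) = l. -/
structure DElt where
  x : ℕ → ℤ
  xb : ℕ → ℤ

namespace DElt

def sumD (n : ℕ) (b : DElt) : ℤ := ∑ i ∈ Finset.Icc 1 n, (b.x i + b.xb i)

/-- membership in the level `l` perfect crystal `B` for `D_n^{(1)}` -/
def mem (n l : ℕ) (b : DElt) : Prop :=
  (∀ i, 0 ≤ b.x i) ∧ (∀ i, 0 ≤ b.xb i) ∧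
  (∀ i, i = 0 ∨ n < i → b.x i = 0 ∧ b.xb i = 0) ∧
  (b.x n = 0 ∨ b.xb n = 0) ∧
  sumD n b = l

/-- the Kashiwara operator `f_0` -/
def f0 (b : DElt) : DElt :=
  if b.xb 2 ≤ b.x 2 then
    ⟨Function.update b.x 2 (b.x 2 + 1), Function.update b.xb 1 (b.xb 1 - 1)⟩
  else
    ⟨Function.update b.x 1 (b.x 1 + 1), Function.update b.xb 2 (b.xb 2 - 1)⟩

/-- the Kashiwara operator `f_i`, `1 ≤ i ≤ n-2` -/
def fmid (i : ℕ) (b : DElt) : DElt :=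
  if b.xb (i+1) ≤ b.x (i+1) then
    ⟨Function.update (Function.update b.x i (b.x i - 1)) (i+1) (b.x (i+1) + 1), b.xb⟩
  else
    ⟨b.x, Function.update (Function.update b.xb (i+1) (b.xb (i+1) - 1)) i (b.xb i + 1)⟩

/-- the Kashiwara operator `f_{n-1}` -/
def fnm1 (n : ℕ) (b : DElt) : DElt :=
  if b.xb n = 0 then
    ⟨Function.update (Function.update b.x (n-1) (b.x (n-1) - 1)) n (b.x n + 1), b.xb⟩
  else
    ⟨b.x, Function.update (Function.update b.xb n (b.xb n - 1)) (n-1) (b.xb (n-1) + 1)⟩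

/-- the Kashiwara operator `f_n` -/
def fn (n : ℕ) (b : DElt) : DElt :=
  if 1 ≤ b.x n then
    ⟨Function.update b.x n (b.x n - 1), Function.update b.xb (n-1) (b.xb (n-1) + 1)⟩
  else
    ⟨Function.update b.x (n-1) (b.x (n-1) - 1), Function.update b.xb n (b.xb n + 1)⟩

/-- the Kashiwara operator `f_i`, `0 ≤ i ≤ n` -/
def f (n i : ℕ) (b : DElt) : DElt :=
  if i = 0 then f0 b else if i = n then fn n b
  else if i = n - 1 then fnm1 n b else fmid i b

/-- `φ_i(b)`; `f_i b` is defined exactly when `φ_i(b) > 0` -/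
def phi (n i : ℕ) (b : DElt) : ℤ :=
  if i = 0 then b.xb 1 + max (b.xb 2 - b.x 2) 0
  else if i = n then b.x (n-1) + b.x n
  else if i = n - 1 then b.x (n-1) + b.xb n
  else b.x i + max (b.xb (i+1) - b.x (i+1)) 0

end DElt

namespace DElt

/-- the index sequence for even `j`: `i_1 = i_{2n-2} = 1`,
`i_a = i_{2n-a-1} = a` for `2 ≤ a ≤ n-2`, `(i_{n-1}, i_n) = (n-1, n)`;
equivalently `i_a = a` for `a ≤ n` and `i_a = 2n-1-a` for `a > n`. -/
def idx (n a : ℕ) : ℕ := if a ≤ n then a else 2 * n - 1 - a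

/-- the ground-state element `(l,0,…,0)` (even `j`) -/
def bbar (l : ℕ) : DElt := ⟨fun i => if i = 1 then (l : ℤ) else 0, fun _ => 0⟩

/-- the recursively defined sets `B_0 = {(l,0,…,0)}`,
`B_a = ⋃_{m ≥ 0} f_{i_a}^m B_{a-1} \ {0}` (even `j`). -/
def BSet (n l : ℕ) : ℕ → Set DElt
  | 0 => {bbar l}
  | a + 1 => {c | ∃ b ∈ BSet n l a, ∃ m : ℕ,
      (∀ k < m, 0 < phi n (idx n (a+1)) ((f n (idx n (a+1)))^[k] b)) ∧
      c = (f n (idx n (a+1)))^[m] b}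

end DElt


namespace DElt

theorem ext' {b c : DElt} (hx : ∀ i, b.x i = c.x i) (hxb : ∀ i, b.xb i = c.xb i) : b = c := by
  cases b; cases c
  simp only [mk.injEq]
  exact ⟨funext hx, funext hxb⟩

lemma sum_upd {s : Finset ℕ} {i : ℕ} (hi : i ∈ s) (f : ℕ → ℤ) (v : ℤ) :
    ∑ j ∈ s, Function.update f i v j = (∑ j ∈ s, f j) + (v - f i) := by
  rw [Finset.sum_update_of_mem hi, ← Finset.erase_eq, ← Finset.add_sum_erase s f hi]; ring

lemma sum_upd2 {s : Finset ℕ} {i j : ℕ} (hi : i ∈ s) (hj : j ∈ s) (hij : i ≠ j)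
    (f : ℕ → ℤ) (u v : ℤ) :
    ∑ k ∈ s, Function.update (Function.update f i u) j v k
      = (∑ k ∈ s, f k) + (u - f i) + (v - f j) := by
  rw [sum_upd hj, sum_upd hi, Function.update_of_ne hij.symm]

theorem iterate_mem {S : Set DElt} {g : DElt → DElt} {φ : DElt → ℤ}
    (hcl : ∀ b ∈ S, 0 < φ b → g b ∈ S) {b : DElt} (hb : b ∈ S) :
    ∀ m : ℕ, (∀ k < m, 0 < φ (g^[k] b)) → g^[m] b ∈ S := by
  intro m
  induction m with
  | zero => intro _; simpa using hb
  | succ m ih =>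
    intro h
    rw [Function.iterate_succ_apply']
    exact hcl _ (ih fun k hk => h k (Nat.lt_succ_of_lt hk)) (h m (Nat.lt_succ_self m))

theorem reach {S P : Set DElt} {g : DElt → DElt} {φ : DElt → ℤ} (μ : DElt → ℕ)
    (hpred : ∀ c ∈ S, c ∉ P → ∃ c' ∈ S, μ c' < μ c ∧ 0 < φ c' ∧ g c' = c) :
    ∀ c ∈ S, ∃ b ∈ P, ∃ m : ℕ, (∀ k < m, 0 < φ (g^[k] b)) ∧ c = g^[m] b := by
  suffices H : ∀ N : ℕ, ∀ c, μ c ≤ N → c ∈ S →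
      ∃ b ∈ P, ∃ m : ℕ, (∀ k < m, 0 < φ (g^[k] b)) ∧ c = g^[m] b by
    intro c hc; exact H (μ c) c le_rfl hc
  intro N
  induction N with
  | zero =>
    intro c hμ hc
    by_cases hP : c ∈ P
    · exact ⟨c, hP, 0, by omega, rfl⟩
    · obtain ⟨c', _, hlt, _, _⟩ := hpred c hc hP
      omega
  | succ N ih =>
    intro c hμ hc
    by_cases hP : c ∈ P
    · exact ⟨c, hP, 0, by omega, rfl⟩
    · obtain ⟨c', hc', hlt, hφ, hgc⟩ := hpred c hc hP
      obtain ⟨b, hb, m, hm, hcb⟩ := ih c' (by omega) hc'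
      refine ⟨b, hb, m + 1, ?_, ?_⟩
      · intro k hk
        rcases Nat.lt_or_ge k m with h | h
        · exact hm k h
        · have : k = m := by omega
          subst this
          rw [← hcb]; exact hφ
      · rw [Function.iterate_succ_apply', ← hcb, hgc]

theorem stage_eq {S P : Set DElt} {g : DElt → DElt} {φ : DElt → ℤ} (μ : DElt → ℕ)
    (hPS : P ⊆ S)
    (hcl : ∀ b ∈ S, 0 < φ b → g b ∈ S)
    (hpred : ∀ c ∈ S, c ∉ P → ∃ c' ∈ S, μ c' < μ c ∧ 0 < φ c' ∧ g c' = c) :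
    {c | ∃ b ∈ P, ∃ m : ℕ, (∀ k < m, 0 < φ (g^[k] b)) ∧ c = g^[m] b} = S := by
  ext c
  constructor
  · rintro ⟨b, hb, m, hm, rfl⟩
    exact iterate_mem hcl (hPS hb) m hm
  · exact fun hc => reach μ hpred c hc

/-- `B_a` for `0 ≤ a ≤ n-2` -/
def SA (n l a : ℕ) : Set DElt :=
  {b | mem n l b ∧ (∀ i, a + 1 < i → b.x i = 0) ∧ ∀ i, b.xb i = 0}

/-- `B_{2n-1-i}` for `1 ≤ i ≤ n-1` -/
def TA (n l i : ℕ) : Set DElt :=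
  {b | mem n l b ∧ ∀ j, j < i → b.xb j = 0}

lemma f_eq_fmid {n t : ℕ} (h0 : t ≠ 0) (hnn : t ≠ n) (hn1 : t ≠ n - 1) :
    f n t = fmid t := by
  funext b; rw [f, if_neg h0, if_neg hnn, if_neg hn1]

lemma f_eq_fnm1 {n : ℕ} (hn : 2 ≤ n) : f n (n - 1) = fnm1 n := by
  funext b; rw [f, if_neg (by omega), if_neg (by omega), if_pos rfl]

lemma f_eq_fn {n : ℕ} (hn : 1 ≤ n) : f n n = fn n := by
  funext b; rw [f, if_neg (by omega), if_pos rfl]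

lemma phi_mid {n t : ℕ} (h0 : t ≠ 0) (hnn : t ≠ n) (hn1 : t ≠ n - 1) (b : DElt) :
    phi n t b = b.x t + max (b.xb (t + 1) - b.x (t + 1)) 0 := by
  rw [phi, if_neg h0, if_neg hnn, if_neg hn1]

lemma phi_nm1 {n : ℕ} (hn : 2 ≤ n) (b : DElt) :
    phi n (n - 1) b = b.x (n - 1) + b.xb n := by
  rw [phi, if_neg (by omega), if_neg (by omega), if_pos rfl]

lemma phi_n {n : ℕ} (hn : 1 ≤ n) (b : DElt) :
    phi n n b = b.x (n - 1) + b.x n := by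
  rw [phi, if_neg (by omega), if_pos rfl]

lemma stage1 (n l a : ℕ) (hn : 4 ≤ n) (ha : a + 1 ≤ n - 2) :
    {c | ∃ b ∈ SA n l a, ∃ m : ℕ, (∀ k < m, 0 < phi n (a + 1) ((f n (a + 1))^[k] b)) ∧
        c = (f n (a + 1))^[m] b} = SA n l (a + 1) := by
  have h0 : a + 1 ≠ 0 := by omega
  have hnn : a + 1 ≠ n := by omega
  have hn1 : a + 1 ≠ n - 1 := by omega
  have hm1 : a + 1 ∈ Finset.Icc 1 n := Finset.mem_Icc.mpr ⟨by omega, by omega⟩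
  have hm2 : a + 1 + 1 ∈ Finset.Icc 1 n := Finset.mem_Icc.mpr ⟨by omega, by omega⟩
  have hne : a + 1 ≠ a + 1 + 1 := by omega
  have hf : f n (a + 1) = fmid (a + 1) := f_eq_fmid h0 hnn hn1
  apply stage_eq (μ := fun c => (c.x (a + 1 + 1)).toNat)
  · rintro b ⟨hm, hsupp, hxb⟩
    exact ⟨hm, fun i hi => hsupp i (by omega), hxb⟩
  · rintro b ⟨⟨hx, hxb0, hz, hor, hs⟩, hsupp, hxb⟩ hφ
    rw [phi_mid h0 hnn hn1, hxb (a + 1 + 1),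
        max_eq_right (by have := hx (a + 1 + 1); omega)] at hφ
    rw [hf, fmid, if_pos (by rw [hxb (a + 1 + 1)]; exact hx _)]
    refine ⟨⟨?_, ?_, ?_, ?_, ?_⟩, ?_, ?_⟩
    · intro i
      simp only [Function.update_apply]
      split_ifs with e1 e2
      · have := hx (a + 1 + 1); omega
      · omega
      · exact hx i
    · exact hxb0
    · intro i hi
      have hzi := hz i hi
      simp only [Function.update_apply]
      split_ifs with e1 e2 <;> constructor <;> first | omega | exact hzi.1 | exact hzi.2
    · right; exact hxb n
    · show sumD n ⟨_, b.xb⟩ = l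
      rw [sumD] at hs ⊢
      rw [Finset.sum_add_distrib] at hs ⊢
      dsimp only
      rw [sum_upd2 hm1 hm2 hne]
      linarith
    · intro i hi
      simp only [Function.update_apply]
      split_ifs with e1 e2
      · omega
      · omega
      · exact hsupp i (by omega)
    · exact hxb
  · rintro c ⟨⟨hx, hxb0, hz, hor, hs⟩, hsupp, hxb⟩ hnP
    have hpos : 0 < c.x (a + 1 + 1) := by
      rcases lt_or_eq_of_le (hx (a + 1 + 1)) with h | h
      · exact h
      · exfalso
        apply hnP
        refine ⟨⟨hx, hxb0, hz, hor, hs⟩, fun i hi => ?_, hxb⟩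
        rcases Nat.lt_or_ge (a + 1 + 1) i with h2 | h2
        · exact hsupp i h2
        · have : i = a + 1 + 1 := by omega
          subst this; omega
    set c' : DElt := ⟨Function.update (Function.update c.x (a + 1) (c.x (a + 1) + 1))
        (a + 1 + 1) (c.x (a + 1 + 1) - 1), c.xb⟩ with hc'
    have v1 : c'.x (a + 1) = c.x (a + 1) + 1 := by
      rw [hc']; dsimp only; rw [Function.update_of_ne hne, Function.update_self]
    have v2 : c'.x (a + 1 + 1) = c.x (a + 1 + 1) - 1 := by
      rw [hc']; dsimp only; rw [Function.update_self]
    have v3 : ∀ i, i ≠ a + 1 → i ≠ a + 1 + 1 → c'.x i = c.x i := by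
      intro i e1 e2
      rw [hc']; dsimp only
      rw [Function.update_of_ne e2, Function.update_of_ne e1]
    have vb : c'.xb = c.xb := rfl
    refine ⟨c', ⟨⟨?_, ?_, ?_, ?_, ?_⟩, ?_, ?_⟩, ?_, ?_, ?_⟩
    · intro i
      by_cases e1 : i = a + 1 + 1
      · rw [e1]; rw [v2]; omega
      by_cases e2 : i = a + 1
      · rw [e2]; rw [v1]; have := hx (a + 1); omega
      · rw [v3 i e2 e1]; exact hx i
    · exact hxb0
    · intro i hi
      have hzi := hz i hi
      have e1 : i ≠ a + 1 + 1 := by omega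
      have e2 : i ≠ a + 1 := by omega
      rw [v3 i e2 e1, vb]
      exact hzi
    · rw [vb]; right; exact hxb n
    · have en1 : (n : ℕ) ≠ a + 1 → True := fun _ => trivial
      rw [show sumD n c' = (∑ i ∈ Finset.Icc 1 n, c'.x i) + ∑ i ∈ Finset.Icc 1 n, c'.xb i
          from Finset.sum_add_distrib]
      rw [show (∑ i ∈ Finset.Icc 1 n, c'.x i) = (∑ i ∈ Finset.Icc 1 n, c.x i)
            + (c.x (a+1) + 1 - c.x (a+1)) + (c.x (a+1+1) - 1 - c.x (a+1+1)) from by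
          rw [hc']; exact sum_upd2 hm1 hm2 hne c.x _ _]
      rw [vb]
      rw [show sumD n c = (∑ i ∈ Finset.Icc 1 n, c.x i) + ∑ i ∈ Finset.Icc 1 n, c.xb i
          from Finset.sum_add_distrib] at hs
      linarith
    · intro i hi
      have e1 : i ≠ a + 1 + 1 := by omega
      have e2 : i ≠ a + 1 := by omega
      rw [v3 i e2 e1]
      exact hsupp i (by omega)
    · exact hxb
    · show (c'.x (a + 1 + 1)).toNat < (c.x (a + 1 + 1)).toNat
      rw [v2]; omega
    · rw [phi_mid h0 hnn hn1, v1, v2, vb, hxb (a + 1 + 1),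
        max_eq_right (by omega)]
      have := hx (a + 1)
      omega
    · rw [hf, fmid]
      rw [if_pos (by rw [vb, v2, hxb (a + 1 + 1)]; omega)]
      apply ext'
      · intro i
        show Function.update (Function.update c'.x (a + 1) (c'.x (a + 1) - 1))
            (a + 1 + 1) (c'.x (a + 1 + 1) + 1) i = c.x i
        by_cases e1 : i = a + 1 + 1
        · rw [e1]; rw [Function.update_self, v2]; ring
        by_cases e2 : i = a + 1
        · subst e2
          rw [Function.update_of_ne hne, Function.update_self, v1]; ring
        · rw [Function.update_of_ne e1, Function.update_of_ne e2, v3 i e2 e1]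
      · intro i; rfl

lemma stage2 (n l : ℕ) (hn : 4 ≤ n) :
    {c | ∃ b ∈ SA n l (n - 2), ∃ m : ℕ,
        (∀ k < m, 0 < phi n (n - 1) ((f n (n - 1))^[k] b)) ∧
        c = (f n (n - 1))^[m] b} = {b | mem n l b ∧ ∀ i, b.xb i = 0} := by
  have hm1 : n - 1 ∈ Finset.Icc 1 n := Finset.mem_Icc.mpr ⟨by omega, by omega⟩
  have hm2 : n ∈ Finset.Icc 1 n := Finset.mem_Icc.mpr ⟨by omega, by omega⟩
  have hne : n - 1 ≠ n := by omega
  have hf : f n (n - 1) = fnm1 n := f_eq_fnm1 (by omega)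
  apply stage_eq (μ := fun c => (c.x n).toNat)
  · rintro b ⟨hm, hsupp, hxb⟩
    exact ⟨hm, hxb⟩
  · rintro b ⟨⟨hx, hxb0, hz, hor, hs⟩, hxb⟩ hφ
    rw [phi_nm1 (by omega), hxb n] at hφ
    rw [hf, fnm1, if_pos (hxb n)]
    refine ⟨⟨?_, ?_, ?_, ?_, ?_⟩, ?_⟩
    · intro i
      simp only [Function.update_apply]
      split_ifs with e1 e2
      · have := hx n; omega
      · omega
      · exact hx i
    · exact hxb0
    · intro i hi
      have hzi := hz i hi
      simp only [Function.update_apply]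
      split_ifs with e1 e2 <;> constructor <;> first | omega | exact hzi.1 | exact hzi.2
    · right; exact hxb n
    · show sumD n ⟨_, b.xb⟩ = l
      rw [sumD] at hs ⊢
      rw [Finset.sum_add_distrib] at hs ⊢
      dsimp only
      rw [sum_upd2 hm1 hm2 hne]
      linarith
    · exact hxb
  · rintro c ⟨⟨hx, hxb0, hz, hor, hs⟩, hxb⟩ hnP
    have hpos : 0 < c.x n := by
      rcases lt_or_eq_of_le (hx n) with h | h
      · exact h
      · exfalso
        apply hnP
        refine ⟨⟨hx, hxb0, hz, hor, hs⟩, fun i hi => ?_, hxb⟩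
        rcases Nat.lt_or_ge n i with h2 | h2
        · exact (hz i (Or.inr h2)).1
        · have : i = n := by omega
          subst this; omega
    set c' : DElt := ⟨Function.update (Function.update c.x (n - 1) (c.x (n - 1) + 1))
        n (c.x n - 1), c.xb⟩ with hc'
    have v1 : c'.x (n - 1) = c.x (n - 1) + 1 := by
      rw [hc']; dsimp only; rw [Function.update_of_ne hne, Function.update_self]
    have v2 : c'.x n = c.x n - 1 := by
      rw [hc']; dsimp only; rw [Function.update_self]
    have v3 : ∀ i, i ≠ n - 1 → i ≠ n → c'.x i = c.x i := by
      intro i e1 e2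
      rw [hc']; dsimp only
      rw [Function.update_of_ne e2, Function.update_of_ne e1]
    have vb : c'.xb = c.xb := rfl
    refine ⟨c', ⟨⟨?_, ?_, ?_, ?_, ?_⟩, ?_⟩, ?_, ?_, ?_⟩
    · intro i
      by_cases e1 : i = n
      · rw [e1]; rw [v2]; omega
      by_cases e2 : i = n - 1
      · rw [e2]; rw [v1]; have := hx (n - 1); omega
      · rw [v3 i e2 e1]; exact hx i
    · exact hxb0
    · intro i hi
      have hzi := hz i hi
      have e1 : i ≠ n := by omega
      have e2 : i ≠ n - 1 := by omega
      rw [v3 i e2 e1, vb]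
      exact hzi
    · rw [vb]; right; exact hxb n
    · rw [show sumD n c' = (∑ i ∈ Finset.Icc 1 n, c'.x i) + ∑ i ∈ Finset.Icc 1 n, c'.xb i
          from Finset.sum_add_distrib]
      rw [show (∑ i ∈ Finset.Icc 1 n, c'.x i) = (∑ i ∈ Finset.Icc 1 n, c.x i)
            + (c.x (n - 1) + 1 - c.x (n - 1)) + (c.x n - 1 - c.x n) from by
          rw [hc']; exact sum_upd2 hm1 hm2 hne c.x _ _]
      rw [vb]
      rw [show sumD n c = (∑ i ∈ Finset.Icc 1 n, c.x i) + ∑ i ∈ Finset.Icc 1 n, c.xb i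
          from Finset.sum_add_distrib] at hs
      linarith
    · exact hxb
    · show (c'.x n).toNat < (c.x n).toNat
      rw [v2]; omega
    · rw [phi_nm1 (by omega), v1, vb, hxb n]
      have := hx (n - 1)
      omega
    · rw [hf, fnm1, if_pos (by rw [vb]; exact hxb n)]
      apply ext'
      · intro i
        show Function.update (Function.update c'.x (n - 1) (c'.x (n - 1) - 1))
            n (c'.x n + 1) i = c.x i
        by_cases e1 : i = n
        · rw [e1]; rw [Function.update_self, v2]; ring
        by_cases e2 : i = n - 1
        · subst e2
          rw [Function.update_of_ne hne, Function.update_self, v1]; ring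
        · rw [Function.update_of_ne e1, Function.update_of_ne e2, v3 i e2 e1]
      · intro i; rfl

lemma stage3 (n l : ℕ) (hn : 4 ≤ n) :
    {c | ∃ b ∈ {b : DElt | mem n l b ∧ ∀ i, b.xb i = 0}, ∃ m : ℕ,
        (∀ k < m, 0 < phi n n ((f n n)^[k] b)) ∧
        c = (f n n)^[m] b} = TA n l (n - 1) := by
  have hm1 : n - 1 ∈ Finset.Icc 1 n := Finset.mem_Icc.mpr ⟨by omega, by omega⟩
  have hm2 : n ∈ Finset.Icc 1 n := Finset.mem_Icc.mpr ⟨by omega, by omega⟩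
  have hne : n - 1 ≠ n := by omega
  have hf : f n n = fn n := f_eq_fn (by omega)
  apply stage_eq (μ := fun c => (c.xb (n - 1) + c.xb n).toNat)
  · rintro b ⟨hm, hxb⟩
    exact ⟨hm, fun j _ => hxb j⟩
  · rintro b ⟨⟨hx, hxb0, hz, hor, hs⟩, hT⟩ hφ
    rw [phi_n (by omega)] at hφ
    rw [hf, fn]
    by_cases hbn : 1 ≤ b.x n
    · have hxbn : b.xb n = 0 := by
        rcases hor with h | h
        · omega
        · exact h
      rw [if_pos hbn]
      refine ⟨⟨?_, ?_, ?_, ?_, ?_⟩, ?_⟩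
      · intro i
        simp only [Function.update_apply]
        split_ifs with e1
        · omega
        · exact hx i
      · intro i
        simp only [Function.update_apply]
        split_ifs with e1
        · have := hxb0 (n - 1); omega
        · exact hxb0 i
      · intro i hi
        have hzi := hz i hi
        simp only [Function.update_apply]
        split_ifs with e1 e2 <;> constructor <;> first | omega | exact hzi.1 | exact hzi.2
      · right
        show Function.update b.xb (n - 1) (b.xb (n - 1) + 1) n = 0
        rw [Function.update_of_ne (by omega)]
        exact hxbn
      · show sumD n ⟨_, _⟩ = l
        rw [sumD] at hs ⊢
        rw [Finset.sum_add_distrib] at hs ⊢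
        dsimp only
        rw [sum_upd hm2, sum_upd hm1]
        linarith
      · intro j hj
        show Function.update b.xb (n - 1) (b.xb (n - 1) + 1) j = 0
        rw [Function.update_of_ne (by omega)]
        exact hT j hj
    · have hxn : b.x n = 0 := by have := hx n; omega
      rw [if_neg hbn]
      refine ⟨⟨?_, ?_, ?_, ?_, ?_⟩, ?_⟩
      · intro i
        simp only [Function.update_apply]
        split_ifs with e1
        · omega
        · exact hx i
      · intro i
        simp only [Function.update_apply]
        split_ifs with e1
        · have := hxb0 n; omega
        · exact hxb0 i
      · intro i hi
        have hzi := hz i hi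
        simp only [Function.update_apply]
        split_ifs with e1 e2 <;> constructor <;> first | omega | exact hzi.1 | exact hzi.2
      · left
        show Function.update b.x (n - 1) (b.x (n - 1) - 1) n = 0
        rw [Function.update_of_ne (by omega)]
        exact hxn
      · show sumD n ⟨_, _⟩ = l
        rw [sumD] at hs ⊢
        rw [Finset.sum_add_distrib] at hs ⊢
        dsimp only
        rw [sum_upd hm2, sum_upd hm1]
        linarith
      · intro j hj
        show Function.update b.xb n (b.xb n + 1) j = 0
        rw [Function.update_of_ne (by omega)]
        exact hT j hj
  · rintro c ⟨⟨hx, hxb0, hz, hor, hs⟩, hT⟩ hnP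
    have hpos : 0 < c.xb (n - 1) + c.xb n := by
      by_contra h
      apply hnP
      have h1 : c.xb (n - 1) = 0 := by have := hxb0 (n - 1); have := hxb0 n; omega
      have h2 : c.xb n = 0 := by have := hxb0 (n - 1); have := hxb0 n; omega
      refine ⟨⟨hx, hxb0, hz, hor, hs⟩, fun i => ?_⟩
      rcases Nat.lt_or_ge i (n - 1) with h3 | h3
      · exact hT i h3
      · rcases Nat.lt_or_ge n i with h4 | h4
        · exact (hz i (Or.inr h4)).2
        · have : i = n - 1 ∨ i = n := by omega
          rcases this with h5 | h5 <;> rw [h5] <;> assumption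
    by_cases hcn : c.xb n = 0
    · have hpos1 : 0 < c.xb (n - 1) := by omega
      set c' : DElt := ⟨Function.update c.x n (c.x n + 1),
          Function.update c.xb (n - 1) (c.xb (n - 1) - 1)⟩ with hc'
      have v1 : c'.x n = c.x n + 1 := by
        rw [hc']; dsimp only; rw [Function.update_self]
      have v2 : ∀ i, i ≠ n → c'.x i = c.x i := by
        intro i e; rw [hc']; dsimp only; rw [Function.update_of_ne e]
      have w1 : c'.xb (n - 1) = c.xb (n - 1) - 1 := by
        rw [hc']; dsimp only; rw [Function.update_self]
      have w2 : ∀ i, i ≠ n - 1 → c'.xb i = c.xb i := by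
        intro i e; rw [hc']; dsimp only; rw [Function.update_of_ne e]
      refine ⟨c', ⟨⟨?_, ?_, ?_, ?_, ?_⟩, ?_⟩, ?_, ?_, ?_⟩
      · intro i
        by_cases e : i = n
        · rw [e]; rw [v1]; have := hx n; omega
        · rw [v2 i e]; exact hx i
      · intro i
        by_cases e : i = n - 1
        · rw [e]; rw [w1]; omega
        · rw [w2 i e]; exact hxb0 i
      · intro i hi
        have hzi := hz i hi
        rw [v2 i (by omega), w2 i (by omega)]
        exact hzi
      · right; rw [w2 n hne.symm]; exact hcn
      · rw [show sumD n c' = (∑ i ∈ Finset.Icc 1 n, c'.x i) + ∑ i ∈ Finset.Icc 1 n, c'.xb i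
            from Finset.sum_add_distrib]
        rw [show (∑ i ∈ Finset.Icc 1 n, c'.x i)
              = (∑ i ∈ Finset.Icc 1 n, c.x i) + (c.x n + 1 - c.x n) from by
            rw [hc']; exact sum_upd hm2 c.x _]
        rw [show (∑ i ∈ Finset.Icc 1 n, c'.xb i)
              = (∑ i ∈ Finset.Icc 1 n, c.xb i) + (c.xb (n - 1) - 1 - c.xb (n - 1)) from by
            rw [hc']; exact sum_upd hm1 c.xb _]
        rw [show sumD n c = (∑ i ∈ Finset.Icc 1 n, c.x i) + ∑ i ∈ Finset.Icc 1 n, c.xb i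
            from Finset.sum_add_distrib] at hs
        linarith
      · intro j hj
        rw [w2 j (by omega)]
        exact hT j hj
      · show (c'.xb (n - 1) + c'.xb n).toNat < (c.xb (n - 1) + c.xb n).toNat
        rw [w1, w2 n hne.symm]; omega
      · rw [phi_n (by omega), v1, v2 (n - 1) hne]
        have := hx (n - 1); have := hx n; omega
      · rw [hf, fn, if_pos (by rw [v1]; have := hx n; omega)]
        apply ext'
        · intro i
          show Function.update c'.x n (c'.x n - 1) i = c.x i
          by_cases e : i = n
          · rw [e]; rw [Function.update_self, v1]; ring
          · rw [Function.update_of_ne e, v2 i e]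
        · intro i
          show Function.update c'.xb (n - 1) (c'.xb (n - 1) + 1) i = c.xb i
          by_cases e : i = n - 1
          · rw [e]; rw [Function.update_self, w1]; ring
          · rw [Function.update_of_ne e, w2 i e]
    · have hxn : c.x n = 0 := by
        rcases hor with h | h
        · exact h
        · exact absurd h hcn
      set c' : DElt := ⟨Function.update c.x (n - 1) (c.x (n - 1) + 1),
          Function.update c.xb n (c.xb n - 1)⟩ with hc'
      have v1 : c'.x (n - 1) = c.x (n - 1) + 1 := by
        rw [hc']; dsimp only; rw [Function.update_self]
      have v2 : ∀ i, i ≠ n - 1 → c'.x i = c.x i := by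
        intro i e; rw [hc']; dsimp only; rw [Function.update_of_ne e]
      have w1 : c'.xb n = c.xb n - 1 := by
        rw [hc']; dsimp only; rw [Function.update_self]
      have w2 : ∀ i, i ≠ n → c'.xb i = c.xb i := by
        intro i e; rw [hc']; dsimp only; rw [Function.update_of_ne e]
      have hcnpos : 0 < c.xb n := by have := hxb0 n; omega
      refine ⟨c', ⟨⟨?_, ?_, ?_, ?_, ?_⟩, ?_⟩, ?_, ?_, ?_⟩
      · intro i
        by_cases e : i = n - 1
        · rw [e]; rw [v1]; have := hx (n - 1); omega
        · rw [v2 i e]; exact hx i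
      · intro i
        by_cases e : i = n
        · rw [e]; rw [w1]; omega
        · rw [w2 i e]; exact hxb0 i
      · intro i hi
        have hzi := hz i hi
        rw [v2 i (by omega), w2 i (by omega)]
        exact hzi
      · left; rw [v2 n hne.symm]; exact hxn
      · rw [show sumD n c' = (∑ i ∈ Finset.Icc 1 n, c'.x i) + ∑ i ∈ Finset.Icc 1 n, c'.xb i
            from Finset.sum_add_distrib]
        rw [show (∑ i ∈ Finset.Icc 1 n, c'.x i)
              = (∑ i ∈ Finset.Icc 1 n, c.x i) + (c.x (n - 1) + 1 - c.x (n - 1)) from by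
            rw [hc']; exact sum_upd hm1 c.x _]
        rw [show (∑ i ∈ Finset.Icc 1 n, c'.xb i)
              = (∑ i ∈ Finset.Icc 1 n, c.xb i) + (c.xb n - 1 - c.xb n) from by
            rw [hc']; exact sum_upd hm2 c.xb _]
        rw [show sumD n c = (∑ i ∈ Finset.Icc 1 n, c.x i) + ∑ i ∈ Finset.Icc 1 n, c.xb i
            from Finset.sum_add_distrib] at hs
        linarith
      · intro j hj
        rw [w2 j (by omega)]
        exact hT j hj
      · show (c'.xb (n - 1) + c'.xb n).toNat < (c.xb (n - 1) + c.xb n).toNat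
        rw [w1, w2 (n - 1) hne]; omega
      · rw [phi_n (by omega), v1, v2 n hne.symm]
        have := hx (n - 1); omega
      · rw [hf, fn, if_neg (by rw [v2 n hne.symm, hxn]; omega)]
        apply ext'
        · intro i
          show Function.update c'.x (n - 1) (c'.x (n - 1) - 1) i = c.x i
          by_cases e : i = n - 1
          · rw [e]; rw [Function.update_self, v1]; ring
          · rw [Function.update_of_ne e, v2 i e]
        · intro i
          show Function.update c'.xb n (c'.xb n + 1) i = c.xb i
          by_cases e : i = n
          · rw [e]; rw [Function.update_self, w1]; ring
          · rw [Function.update_of_ne e, w2 i e]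

lemma stage4 (n l t : ℕ) (hn : 4 ≤ n) (h1 : 1 ≤ t) (h2 : t ≤ n - 2) :
    {c | ∃ b ∈ TA n l (t + 1), ∃ m : ℕ,
        (∀ k < m, 0 < phi n t ((f n t)^[k] b)) ∧
        c = (f n t)^[m] b} = TA n l t := by
  have h0 : t ≠ 0 := by omega
  have hnn : t ≠ n := by omega
  have hn1 : t ≠ n - 1 := by omega
  have hm1 : t ∈ Finset.Icc 1 n := Finset.mem_Icc.mpr ⟨by omega, by omega⟩
  have hm2 : t + 1 ∈ Finset.Icc 1 n := Finset.mem_Icc.mpr ⟨by omega, by omega⟩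
  have hne : t ≠ t + 1 := by omega
  have hf : f n t = fmid t := f_eq_fmid h0 hnn hn1
  apply stage_eq (μ := fun c => (c.xb t).toNat + (c.x (t + 1) - c.xb (t + 1)).toNat)
  · rintro b ⟨hm, hT⟩
    exact ⟨hm, fun j hj => hT j (by omega)⟩
  · rintro b ⟨⟨hx, hxb0, hz, hor, hs⟩, hT⟩ hφ
    rw [phi_mid h0 hnn hn1] at hφ
    rw [hf, fmid]
    by_cases hbr : b.xb (t + 1) ≤ b.x (t + 1)
    · rw [max_eq_right (by omega)] at hφ
      rw [if_pos hbr]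
      refine ⟨⟨?_, ?_, ?_, ?_, ?_⟩, ?_⟩
      · intro i
        simp only [Function.update_apply]
        split_ifs with e1 e2
        · have := hx (t + 1); omega
        · omega
        · exact hx i
      · exact hxb0
      · intro i hi
        have hzi := hz i hi
        simp only [Function.update_apply]
        split_ifs with e1 e2 <;> constructor <;> first | omega | exact hzi.1 | exact hzi.2
      · show Function.update (Function.update b.x t (b.x t - 1)) (t + 1) (b.x (t + 1) + 1) n
            = 0 ∨ b.xb n = 0
        rw [Function.update_of_ne (by omega), Function.update_of_ne (by omega)]
        exact hor
      · show sumD n ⟨_, b.xb⟩ = l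
        rw [sumD] at hs ⊢
        rw [Finset.sum_add_distrib] at hs ⊢
        dsimp only
        rw [sum_upd2 hm1 hm2 hne]
        linarith
      · exact hT
    · rw [if_neg hbr]
      have hgt : b.x (t + 1) < b.xb (t + 1) := by omega
      refine ⟨⟨?_, ?_, ?_, ?_, ?_⟩, ?_⟩
      · exact hx
      · intro i
        simp only [Function.update_apply]
        split_ifs with e1 e2
        · have := hxb0 t; omega
        · have := hx (t + 1); omega
        · exact hxb0 i
      · intro i hi
        have hzi := hz i hi
        simp only [Function.update_apply]
        split_ifs with e1 e2 <;> constructor <;> first | omega | exact hzi.1 | exact hzi.2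
      · show b.x n = 0 ∨ Function.update (Function.update b.xb (t + 1) (b.xb (t + 1) - 1)) t
            (b.xb t + 1) n = 0
        rw [Function.update_of_ne (by omega), Function.update_of_ne (by omega)]
        exact hor
      · show sumD n ⟨b.x, _⟩ = l
        rw [sumD] at hs ⊢
        rw [Finset.sum_add_distrib] at hs ⊢
        dsimp only
        rw [sum_upd2 hm2 hm1 hne.symm]
        linarith
      · intro j hj
        show Function.update (Function.update b.xb (t + 1) (b.xb (t + 1) - 1)) t
            (b.xb t + 1) j = 0
        rw [Function.update_of_ne (by omega), Function.update_of_ne (by omega)]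
        exact hT j hj
  · rintro c ⟨⟨hx, hxb0, hz, hor, hs⟩, hT⟩ hnP
    have hpos : 0 < c.xb t := by
      rcases lt_or_eq_of_le (hxb0 t) with h | h
      · exact h
      · exfalso
        apply hnP
        refine ⟨⟨hx, hxb0, hz, hor, hs⟩, fun j hj => ?_⟩
        rcases Nat.lt_or_ge j t with h2 | h2
        · exact hT j h2
        · have : j = t := by omega
          subst this; omega
    by_cases hbr : c.xb (t + 1) < c.x (t + 1)
    · set c' : DElt := ⟨Function.update (Function.update c.x t (c.x t + 1))
          (t + 1) (c.x (t + 1) - 1), c.xb⟩ with hc'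
      have v1 : c'.x t = c.x t + 1 := by
        rw [hc']; dsimp only; rw [Function.update_of_ne hne, Function.update_self]
      have v2 : c'.x (t + 1) = c.x (t + 1) - 1 := by
        rw [hc']; dsimp only; rw [Function.update_self]
      have v3 : ∀ i, i ≠ t → i ≠ t + 1 → c'.x i = c.x i := by
        intro i e1 e2
        rw [hc']; dsimp only
        rw [Function.update_of_ne e2, Function.update_of_ne e1]
      have vb : c'.xb = c.xb := rfl
      refine ⟨c', ⟨⟨?_, ?_, ?_, ?_, ?_⟩, ?_⟩, ?_, ?_, ?_⟩
      · intro i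
        by_cases e1 : i = t + 1
        · rw [e1]; rw [v2]; have := hxb0 (t + 1); omega
        by_cases e2 : i = t
        · rw [e2]; rw [v1]; have := hx t; omega
        · rw [v3 i e2 e1]; exact hx i
      · exact hxb0
      · intro i hi
        have hzi := hz i hi
        rw [v3 i (by omega) (by omega), vb]
        exact hzi
      · rw [v3 n (by omega) (by omega), vb]
        exact hor
      · rw [show sumD n c' = (∑ i ∈ Finset.Icc 1 n, c'.x i) + ∑ i ∈ Finset.Icc 1 n, c'.xb i
            from Finset.sum_add_distrib]
        rw [show (∑ i ∈ Finset.Icc 1 n, c'.x i) = (∑ i ∈ Finset.Icc 1 n, c.x i)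
              + (c.x t + 1 - c.x t) + (c.x (t + 1) - 1 - c.x (t + 1)) from by
            rw [hc']; exact sum_upd2 hm1 hm2 hne c.x _ _]
        rw [vb]
        rw [show sumD n c = (∑ i ∈ Finset.Icc 1 n, c.x i) + ∑ i ∈ Finset.Icc 1 n, c.xb i
            from Finset.sum_add_distrib] at hs
        linarith
      · intro j hj
        rw [show c'.xb j = c.xb j from rfl]
        exact hT j hj
      · show (c'.xb t).toNat + (c'.x (t + 1) - c'.xb (t + 1)).toNat
            < (c.xb t).toNat + (c.x (t + 1) - c.xb (t + 1)).toNat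
        rw [v2, vb]; omega
      · rw [phi_mid h0 hnn hn1, v1, v2, vb,
          max_eq_right (by have := hxb0 (t + 1); omega)]
        have := hx t; omega
      · rw [hf, fmid, if_pos (by rw [vb, v2]; omega)]
        apply ext'
        · intro i
          show Function.update (Function.update c'.x t (c'.x t - 1))
              (t + 1) (c'.x (t + 1) + 1) i = c.x i
          by_cases e1 : i = t + 1
          · rw [e1]; rw [Function.update_self, v2]; ring
          by_cases e2 : i = t
          · subst e2
            rw [Function.update_of_ne hne, Function.update_self, v1]; ring
          · rw [Function.update_of_ne e1, Function.update_of_ne e2, v3 i e2 e1]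
        · intro i; rfl
    · set c' : DElt := ⟨c.x, Function.update (Function.update c.xb t (c.xb t - 1))
          (t + 1) (c.xb (t + 1) + 1)⟩ with hc'
      have w1 : c'.xb t = c.xb t - 1 := by
        rw [hc']; dsimp only; rw [Function.update_of_ne hne, Function.update_self]
      have w2 : c'.xb (t + 1) = c.xb (t + 1) + 1 := by
        rw [hc']; dsimp only; rw [Function.update_self]
      have w3 : ∀ i, i ≠ t → i ≠ t + 1 → c'.xb i = c.xb i := by
        intro i e1 e2
        rw [hc']; dsimp only
        rw [Function.update_of_ne e2, Function.update_of_ne e1]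
      have vx : c'.x = c.x := rfl
      refine ⟨c', ⟨⟨?_, ?_, ?_, ?_, ?_⟩, ?_⟩, ?_, ?_, ?_⟩
      · exact hx
      · intro i
        by_cases e1 : i = t + 1
        · rw [e1]; rw [w2]; have := hxb0 (t + 1); omega
        by_cases e2 : i = t
        · rw [e2]; rw [w1]; omega
        · rw [w3 i e2 e1]; exact hxb0 i
      · intro i hi
        have hzi := hz i hi
        rw [vx, w3 i (by omega) (by omega)]
        exact hzi
      · rw [vx, w3 n (by omega) (by omega)]
        exact hor
      · rw [show sumD n c' = (∑ i ∈ Finset.Icc 1 n, c'.x i) + ∑ i ∈ Finset.Icc 1 n, c'.xb i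
            from Finset.sum_add_distrib]
        rw [show (∑ i ∈ Finset.Icc 1 n, c'.xb i) = (∑ i ∈ Finset.Icc 1 n, c.xb i)
              + (c.xb t - 1 - c.xb t) + (c.xb (t + 1) + 1 - c.xb (t + 1)) from by
            rw [hc']; exact sum_upd2 hm1 hm2 hne c.xb _ _]
        rw [vx]
        rw [show sumD n c = (∑ i ∈ Finset.Icc 1 n, c.x i) + ∑ i ∈ Finset.Icc 1 n, c.xb i
            from Finset.sum_add_distrib] at hs
        linarith
      · intro j hj
        rw [w3 j (by omega) (by omega)]
        exact hT j hj
      · show (c'.xb t).toNat + (c'.x (t + 1) - c'.xb (t + 1)).toNat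
            < (c.xb t).toNat + (c.x (t + 1) - c.xb (t + 1)).toNat
        rw [w1, w2, vx]; omega
      · rw [phi_mid h0 hnn hn1, vx, w2,
          max_eq_left (by omega)]
        have := hx t; omega
      · rw [hf, fmid, if_neg (by rw [vx, w2]; omega)]
        apply ext'
        · intro i; rfl
        · intro i
          show Function.update (Function.update c'.xb (t + 1) (c'.xb (t + 1) - 1))
              t (c'.xb t + 1) i = c.xb i
          by_cases e2 : i = t
          · rw [e2]; rw [Function.update_self, w1]; ring
          by_cases e1 : i = t + 1
          · subst e1
            rw [Function.update_of_ne hne.symm, Function.update_self, w2]; ring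
          · rw [Function.update_of_ne e2, Function.update_of_ne e1, w3 i e2 e1]
        
lemma base0 (n l : ℕ) (hn : 4 ≤ n) : BSet n l 0 = SA n l 0 := by
  have h1n : (1 : ℕ) ∈ Finset.Icc 1 n := Finset.mem_Icc.mpr ⟨le_rfl, by omega⟩
  ext b
  constructor
  · intro hb
    have hb' : b = bbar l := hb
    subst hb'
    refine ⟨⟨?_, ?_, ?_, ?_, ?_⟩, ?_, ?_⟩
    · intro i
      show 0 ≤ (if i = 1 then (l : ℤ) else 0)
      split_ifs
      · exact Int.natCast_nonneg l
      · exact le_refl 0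
    · intro i; exact le_refl 0
    · intro i hi
      constructor
      · show (if i = 1 then (l : ℤ) else 0) = 0
        rw [if_neg (by omega)]
      · rfl
    · right; rfl
    · show sumD n (bbar l) = l
      rw [sumD]
      have : ∀ i ∈ Finset.Icc 1 n, (bbar l).x i + (bbar l).xb i
          = if i = 1 then (l : ℤ) else 0 := by
        intro i _
        show (if i = 1 then (l : ℤ) else 0) + 0 = _
        ring
      rw [Finset.sum_congr rfl this, Finset.sum_ite_eq' (Finset.Icc 1 n) 1 fun _ => (l : ℤ),
        if_pos h1n]
    · intro i hi
      show (if i = 1 then (l : ℤ) else 0) = 0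
      rw [if_neg (by omega)]
    · intro i; rfl
  · rintro ⟨⟨hx, hxb0, hz, hor, hs⟩, hsupp, hxb⟩
    show b = bbar l
    have hx1 : b.x 1 = l := by
      have h1 : sumD n b = b.x 1 + b.xb 1 := by
        rw [sumD]
        apply Finset.sum_eq_single_of_mem 1 h1n
        intro j hj hj1
        have hj' := Finset.mem_Icc.mp hj
        rw [hsupp j (by omega), hxb j]
        ring
      have := hxb 1
      omega
    apply ext'
    · intro i
      show b.x i = if i = 1 then (l : ℤ) else 0
      by_cases e : i = 1
      · rw [e, if_pos rfl, hx1]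
      · rw [if_neg e]
        rcases Nat.lt_or_ge i 1 with h | h
        · exact (hz i (Or.inl (by omega))).1
        · rcases Nat.lt_or_ge n i with h2 | h2
          · exact (hz i (Or.inr h2)).1
          · exact hsupp i (by omega)
    · intro i
      exact hxb i

/-- the description of `B_a` -/
def Desc (n l a : ℕ) : Set DElt :=
  if a ≤ n - 2 then SA n l a
  else if a = n - 1 then {b | mem n l b ∧ ∀ i, b.xb i = 0}
  else TA n l (2 * n - 1 - a)

theorem master (n l : ℕ) (hn : 4 ≤ n) : ∀ a, a ≤ 2 * n - 2 → BSet n l a = Desc n l a := by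
  intro a
  induction a with
  | zero => intro _; rw [base0 n l hn, Desc, if_pos (by omega)]
  | succ a ih =>
    intro ha
    have hB : BSet n l (a + 1) = {c | ∃ b ∈ BSet n l a, ∃ m : ℕ,
        (∀ k < m, 0 < phi n (idx n (a + 1)) ((f n (idx n (a + 1)))^[k] b)) ∧
        c = (f n (idx n (a + 1)))^[m] b} := rfl
    rw [hB, ih (by omega)]
    by_cases h1 : a + 1 ≤ n - 2
    · rw [show idx n (a + 1) = a + 1 from by rw [idx, if_pos (by omega)]]
      rw [show Desc n l a = SA n l a from by rw [Desc, if_pos (by omega)]]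
      rw [show Desc n l (a + 1) = SA n l (a + 1) from by rw [Desc, if_pos h1]]
      exact stage1 n l a hn h1
    · by_cases h2 : a + 1 = n - 1
      · have ha' : a = n - 2 := by omega
        subst ha'
        rw [show (n : ℕ) - 2 + 1 = n - 1 from by omega]
        rw [show idx n (n - 1) = n - 1 from by rw [idx, if_pos (by omega)]]
        rw [show Desc n l (n - 2) = SA n l (n - 2) from by rw [Desc, if_pos le_rfl]]
        rw [show Desc n l (n - 1) = {b | mem n l b ∧ ∀ i, b.xb i = 0} from by
          rw [Desc, if_neg (by omega), if_pos rfl]]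
        exact stage2 n l hn
      · by_cases h3 : a + 1 = n
        · have ha' : a = n - 1 := by omega
          subst ha'
          rw [show (n : ℕ) - 1 + 1 = n from by omega]
          rw [show idx n n = n from by rw [idx, if_pos le_rfl]]
          rw [show Desc n l (n - 1) = {b | mem n l b ∧ ∀ i, b.xb i = 0} from by
            rw [Desc, if_neg (by omega), if_pos rfl]]
          rw [show Desc n l n = TA n l (n - 1) from by
            rw [Desc, if_neg (by omega), if_neg (by omega),
              show 2 * n - 1 - n = n - 1 from by omega]]
          exact stage3 n l hn
        · have hgt : n < a + 1 := by omega
          rw [show idx n (a + 1) = 2 * n - 2 - a from by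
            rw [idx, if_neg (by omega)]
            omega]
          rw [show Desc n l a = TA n l (2 * n - 2 - a + 1) from by
            rw [Desc, if_neg (by omega), if_neg (by omega),
              show 2 * n - 1 - a = 2 * n - 2 - a + 1 from by omega]]
          rw [show Desc n l (a + 1) = TA n l (2 * n - 2 - a) from by
            rw [Desc, if_neg (by omega), if_neg (by omega),
              show 2 * n - 1 - (a + 1) = 2 * n - 2 - a from by omega]]
          exact stage4 n l (2 * n - 2 - a) hn (by omega) (by omega)

end DElt

/-- in the `D_n^{(1)}` perfect crystal of level `l` with `j` even,
the recursively defined sets satisfy `B_a = {(x_1,…,x_{a+1},0,…,0)}` for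
`1 ≤ a ≤ n-2`, `B_{n-1} = {(x_1,…,x_n,0,…,0)}`,
`B_{n+a-1} = {(x_1,…,x_n,x̄_n,…,x̄_{n-a},0,…,0)}` for `1 ≤ a ≤ n-2`, and
`B_{2n-2} = B`. -/
theorem Dn1_Demazure_subsets (n l : ℕ) (hn : 4 ≤ n) (hl : 1 ≤ l) :
    (∀ a, 1 ≤ a → a ≤ n - 2 →
      DElt.BSet n l a =
        {b | DElt.mem n l b ∧ (∀ i, a + 1 < i → b.x i = 0) ∧ ∀ i, b.xb i = 0}) ∧
    DElt.BSet n l (n - 1) = {b | DElt.mem n l b ∧ ∀ i, b.xb i = 0} ∧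
    (∀ a, 1 ≤ a → a ≤ n - 2 →
      DElt.BSet n l (n + a - 1) =
        {b | DElt.mem n l b ∧ ∀ i, i < n - a → b.xb i = 0}) ∧
    DElt.BSet n l (2 * n - 2) = {b | DElt.mem n l b} := by
  have M := DElt.master n l hn
  refine ⟨?_, ?_, ?_, ?_⟩
  · intro a h1 h2
    rw [M a (by omega), DElt.Desc, if_pos h2]
    rfl
  · rw [M (n - 1) (by omega), DElt.Desc, if_neg (by omega), if_pos rfl]
  · intro a h1 h2
    rw [M (n + a - 1) (by omega), DElt.Desc, if_neg (by omega), if_neg (by omega)]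
    rw [show 2 * n - 1 - (n + a - 1) = n - a from by omega]
    rfl
  · rw [M (2 * n - 2) (by omega), DElt.Desc, if_neg (by omega), if_neg (by omega)]
    rw [show 2 * n - 1 - (2 * n - 2) = 1 from by omega]
    ext b
    constructor
    · rintro ⟨hm, _⟩; exact hm
    · intro hm
      refine ⟨hm, fun j hj => ?_⟩
      have hj0 : j = 0 := by omega
      subst hj0
      exact (hm.2.2.1 0 (Or.inl rfl)).2
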